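/- arXiv:2212.10055 — 3 statements merged into one kernel-verified Lean document; each statement's English description precedes it below -/
import Mathlib

section
/- The main identity: for every z ∈ ℂ, c(z)³ + s(z)³ + d(z)³ − 3·c(z)·s(z)·d(z) = 1. -/
open Complex

/-- ω = exp(2πi/3), a primitive cube root of unity. -/
noncomputable def ω : ℂ := Complex.exp (2 * Real.pi * Complex.I / 3)

/-- c(z) = (1/3)·∑_{k=1}^{3} exp(ω^k z). -/
noncomputable def cf (z : ℂ) : ℂ :=
  (1/3) * (Complex.exp (ω ^ 1 * z) + Complex.exp (ω ^ 2 * z) + Complex.exp (ω ^ 3 * z))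

/-- s(z) = (1/3)·∑_{k=1}^{3} ω^{-k} exp(ω^k z). -/
noncomputable def sf (z : ℂ) : ℂ :=
  (1/3) * ((ω ^ 1)⁻¹ * Complex.exp (ω ^ 1 * z) + (ω ^ 2)⁻¹ * Complex.exp (ω ^ 2 * z) +
    (ω ^ 3)⁻¹ * Complex.exp (ω ^ 3 * z))

/-- d(z) = (1/3)·∑_{k=1}^{3} ω^k exp(ω^k z). -/
noncomputable def df (z : ℂ) : ℂ :=
  (1/3) * (ω ^ 1 * Complex.exp (ω ^ 1 * z) + ω ^ 2 * Complex.exp (ω ^ 2 * z) +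
    ω ^ 3 * Complex.exp (ω ^ 3 * z))

lemma hω3 : ω ^ 3 = 1 := by
  rw [ω, ← Complex.exp_nat_mul]
  rw [show (3:ℕ) * (2 * Real.pi * Complex.I / 3) = 2 * Real.pi * Complex.I by push_cast; ring]
  exact Complex.exp_two_pi_mul_I

lemma hωne : ω ≠ 1 := by
  intro h
  have him : ω.im = Real.sin (2 * Real.pi / 3) := by
    rw [ω, show 2 * Real.pi * Complex.I / 3 = ((2 * Real.pi / 3 : ℝ) : ℂ) * Complex.I by push_cast; ring]
    rw [Complex.exp_ofReal_mul_I_im]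
  have hpos : 0 < Real.sin (2 * Real.pi / 3) := by
    apply Real.sin_pos_of_pos_of_lt_pi <;> nlinarith [Real.pi_pos]
  rw [h] at him
  simp at him
  linarith [him ▸ hpos]

lemma hs : ω ^ 2 + ω + 1 = 0 := by
  have h : (ω - 1) * (ω ^ 2 + ω + 1) = 0 := by linear_combination hω3
  rcases mul_eq_zero.1 h with h1 | h2
  · exact absurd (sub_eq_zero.1 h1) hωne
  · exact h2

lemma hi1 : ω⁻¹ = ω ^ 2 :=
  inv_eq_of_mul_eq_one_right (by linear_combination hω3)

lemma hi2 : (ω ^ 2)⁻¹ = ω := by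
  exact inv_eq_of_mul_eq_one_right (by linear_combination hω3)

lemma hi3 : (ω ^ 3)⁻¹ = 1 := by rw [hω3]; simp

lemma e1 (z : ℂ) : cf z + sf z + df z = Complex.exp z := by
  simp only [cf, sf, df, hi1, hi2, hi3, hω3, one_mul, pow_one]
  linear_combination (Complex.exp (ω * z) / 3 + Complex.exp (ω ^ 2 * z) / 3) * hs

lemma e2 (z : ℂ) : cf z + ω * sf z + ω ^ 2 * df z = Complex.exp (ω * z) := by
  simp only [cf, sf, df, hi1, hi2, hi3, hω3, one_mul, pow_one]
  linear_combination (Complex.exp (ω * z) * (2 * (ω - 1)) / 3 +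
    Complex.exp (ω ^ 2 * z) * (ω ^ 2 - ω + 1) / 3 + Complex.exp z / 3) * hs

lemma e3 (z : ℂ) : cf z + ω ^ 2 * sf z + ω * df z = Complex.exp (ω ^ 2 * z) := by
  simp only [cf, sf, df, hi1, hi2, hi3, hω3, one_mul, pow_one]
  linear_combination (Complex.exp (ω * z) * (ω ^ 2 - ω + 1) / 3 +
    Complex.exp (ω ^ 2 * z) * (2 * (ω - 1)) / 3 + Complex.exp z / 3) * hs

lemma e4 (z : ℂ) : Complex.exp z * Complex.exp (ω * z) * Complex.exp (ω ^ 2 * z) = 1 := by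
  rw [← Complex.exp_add, ← Complex.exp_add,
    show z + ω * z + ω ^ 2 * z = 0 by linear_combination z * hs, Complex.exp_zero]

/-- the main identity. -/
theorem stmt_3 (z : ℂ) :
    cf z ^ 3 + sf z ^ 3 + df z ^ 3 - 3 * cf z * sf z * df z = 1 := by
  have E1 := e1 z
  have E2 := e2 z
  have E3 := e3 z
  have E4 := e4 z
  linear_combination
    ((1 - ω) * (sf z ^ 3 + df z ^ 3) - (cf z ^ 2 * sf z + cf z ^ 2 * df z)
      - ω * (cf z * sf z ^ 2 + cf z * df z ^ 2)
      - ω ^ 2 * (sf z ^ 2 * df z + sf z * df z ^ 2)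
      + (ω - ω ^ 2 - 3) * (cf z * sf z * df z)) * hs
    + ((cf z + ω * sf z + ω ^ 2 * df z) * (cf z + ω ^ 2 * sf z + ω * df z)) * E1
    + (Complex.exp z * (cf z + ω ^ 2 * sf z + ω * df z)) * E2
    + (Complex.exp z * Complex.exp (ω * z)) * E3
    + E4
end

section
/- Let n ∈ ℤ and let y : ℝ → ℂ be three times continuously differentiable on [0,1] with i·y‴(x) = (2nπ)³·y(x) for all x ∈ [0,1], and suppose y satisfies the periodic boundary conditions y(1) = y(0), y′(1) = y′(0), y″(1) = y″(0). Then y(x) = y(0)·exp(2nπ·i·x) for all x ∈ [0,1]. In particular, every eigenvalue zₙ = (2nπ)³ of the operator L₀ is simple and the eigenfunctions are uₙ(x) = exp(2nπ·i·x). -/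
/-!
Write `ω = i k` with `k = 2nπ`, so the equation reads `y‴ = ω³ y`. For every cube root `r` of
`ω³`, the combination `y″ + r y′ + r² y` solves `w′ = r w`, hence equals `w(0) e^{r x}`; if
`e^r ≠ 1`, periodicity forces it to vanish. For `k ≠ 0` the two cube roots `r ≠ ω` have nonzero
real part, and subtracting the two resulting identities leaves `y′ = ω y`. For `k = 0`, a periodic
function with constant derivative is constant, applied successively to `y″`, `y′` and `y`.
-/

open Set Complex

theorem ContDiffOn.hasDerivWithinAt_iteratedDerivWithin {𝕜 F : Type*} [NontriviallyNormedField 𝕜]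
    [NormedAddCommGroup F] [NormedSpace 𝕜 F] {f : 𝕜 → F} {s : Set 𝕜} {n : WithTop ℕ∞} {m : ℕ}
    (hf : ContDiffOn 𝕜 n f s) (hmn : m < n) (hs : UniqueDiffOn 𝕜 s) {x : 𝕜} (hx : x ∈ s) :
    HasDerivWithinAt (iteratedDerivWithin m f s) (iteratedDerivWithin (m + 1) f s x) s x := by
  rw [iteratedDerivWithin_succ]
  exact ((hf.differentiableOn_iteratedDerivWithin hmn hs) x hx).hasDerivWithinAt

theorem Complex.exp_ne_one_of_re_ne_zero {z : ℂ} (hz : z.re ≠ 0) : exp z ≠ 1 := by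
  intro h
  have := congrArg norm h
  rw [norm_exp, norm_one, Real.exp_eq_one_iff] at this
  exact hz this

section FirstOrder

variable {a b : ℝ}

theorem eq_of_hasDerivWithinAt_zero {E : Type*} [NormedAddCommGroup E] [NormedSpace ℝ E]
    {f : ℝ → E} (hf : ∀ x ∈ Icc a b, HasDerivWithinAt f 0 (Icc a b) x) :
    ∀ x ∈ Icc a b, f x = f a := by
  refine constant_of_has_deriv_right_zero (fun x hx => (hf x hx).continuousWithinAt)
    fun x hx => (hf x (Ico_subset_Icc_self hx)).mono_of_mem_nhdsWithin ?_
  exact Filter.mem_of_superset (Icc_mem_nhdsGE hx.2) (Icc_subset_Icc hx.1 le_rfl)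

theorem eq_mul_exp_of_hasDerivWithinAt_mul (r : ℂ) {f : ℝ → ℂ}
    (hf : ∀ x ∈ Icc a b, HasDerivWithinAt f (r * f x) (Icc a b) x) :
    ∀ x ∈ Icc a b, f x = f a * exp (r * (x - a)) := by
  have hexp (x : ℝ) : HasDerivAt (fun t : ℝ => exp (-r * t)) (exp (-r * x) * -r) x := by
    simpa using ((ofRealCLM.hasDerivAt (x := x)).const_mul (-r)).cexp
  have hconst := eq_of_hasDerivWithinAt_zero (f := fun t => exp (-r * t) * f t) fun x hx =>
    ((hexp x).hasDerivWithinAt.mul (hf x hx)).congr_deriv (by ring)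
  intro x hx
  calc f x = exp (r * x) * (exp (-r * x) * f x) := by
        rw [← mul_assoc, ← exp_add, show r * x + -r * x = 0 by ring, exp_zero, one_mul]
    _ = f a * exp (-r * a + r * x) := by rw [hconst x hx, exp_add]; ring
    _ = f a * exp (r * (x - a)) := by ring_nf

theorem eq_zero_of_hasDerivWithinAt_mul_of_periodic {r : ℂ} (hr : exp (r * (b - a)) ≠ 1)
    {f : ℝ → ℂ} (hf : ∀ x ∈ Icc a b, HasDerivWithinAt f (r * f x) (Icc a b) x)
    (hper : f b = f a) : ∀ x ∈ Icc a b, f x = 0 := by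
  intro x hx
  have hsol := eq_mul_exp_of_hasDerivWithinAt_mul r hf
  have hfa : f a = 0 := by
    have hb := hsol b (right_mem_Icc.2 (hx.1.trans hx.2))
    rw [hper] at hb
    have : f a * (exp (r * (b - a)) - 1) = 0 := by linear_combination -hb
    exact (mul_eq_zero.1 this).resolve_right (sub_ne_zero.2 hr)
  rw [hsol x hx, hfa, zero_mul]

end FirstOrder

theorem hasDerivWithinAt_zero_of_periodic {f g : ℝ → ℂ}
    (hf : ∀ x ∈ Icc (0 : ℝ) 1, HasDerivWithinAt f (g x) (Icc 0 1) x)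
    (hg : ∀ x ∈ Icc (0 : ℝ) 1, HasDerivWithinAt g 0 (Icc 0 1) x) (hper : f 1 = f 0) :
    ∀ x ∈ Icc (0 : ℝ) 1, HasDerivWithinAt f 0 (Icc 0 1) x := by
  have hg_const := eq_of_hasDerivWithinAt_zero hg
  have hlin : ∀ x ∈ Icc (0 : ℝ) 1, f x - g 0 * x = f 0 - g 0 * (0 : ℝ) := by
    refine eq_of_hasDerivWithinAt_zero fun x hx => ?_
    have hid : HasDerivAt (fun t : ℝ => g 0 * (t : ℂ)) (g 0) x := by
      simpa using (ofRealCLM.hasDerivAt (x := x)).const_mul (g 0)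
    exact ((hf x hx).sub hid.hasDerivWithinAt).congr_deriv (by rw [hg_const x hx, sub_self])
  have hg0 : g 0 = 0 := by simpa [hper] using hlin 1 (right_mem_Icc.2 zero_le_one)
  intro x hx
  simpa [hg_const x hx, hg0] using hf x hx

section ThirdOrder

variable {y y₁ y₂ : ℝ → ℂ}

theorem companion_eq_zero_of_periodic {r : ℂ} (hr : exp r ≠ 1)
    (hy : ∀ x ∈ Icc (0 : ℝ) 1, HasDerivWithinAt y (y₁ x) (Icc 0 1) x)
    (hy₁ : ∀ x ∈ Icc (0 : ℝ) 1, HasDerivWithinAt y₁ (y₂ x) (Icc 0 1) x)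
    (hy₂ : ∀ x ∈ Icc (0 : ℝ) 1, HasDerivWithinAt y₂ (r ^ 3 * y x) (Icc 0 1) x)
    (h₀ : y 1 = y 0) (h₁ : y₁ 1 = y₁ 0) (h₂ : y₂ 1 = y₂ 0) :
    ∀ x ∈ Icc (0 : ℝ) 1, y₂ x + r * y₁ x + r ^ 2 * y x = 0 := by
  refine eq_zero_of_hasDerivWithinAt_mul_of_periodic (by simpa using hr) (fun x hx => ?_)
    (by simp only [h₀, h₁, h₂])
  exact (((hy₂ x hx).add ((hy₁ x hx).const_mul r)).add ((hy x hx).const_mul (r ^ 2))).congr_deriv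
    (by ring)

theorem eq_mul_exp_of_periodic_of_deriv_three (k : ℝ)
    (hy : ∀ x ∈ Icc (0 : ℝ) 1, HasDerivWithinAt y (y₁ x) (Icc 0 1) x)
    (hy₁ : ∀ x ∈ Icc (0 : ℝ) 1, HasDerivWithinAt y₁ (y₂ x) (Icc 0 1) x)
    (hy₂ : ∀ x ∈ Icc (0 : ℝ) 1, HasDerivWithinAt y₂ ((I * k) ^ 3 * y x) (Icc 0 1) x)
    (h₀ : y 1 = y 0) (h₁ : y₁ 1 = y₁ 0) (h₂ : y₂ 1 = y₂ 0) :
    ∀ x ∈ Icc (0 : ℝ) 1, y x = y 0 * exp (I * k * x) := by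
  rcases eq_or_ne k 0 with rfl | hk
  · have hy₂' : ∀ x ∈ Icc (0 : ℝ) 1, HasDerivWithinAt y₂ 0 (Icc 0 1) x := by simpa using hy₂
    have hy' := hasDerivWithinAt_zero_of_periodic hy
      (hasDerivWithinAt_zero_of_periodic hy₁ hy₂' h₁) h₀
    simpa using eq_of_hasDerivWithinAt_zero hy'
  -- `r = -(k/2)(i + s)` with `s = ±√3` are the cube roots of `(ik)³` other than `ik`.
  have companion (s : ℝ) (hs : s ^ 2 = 3) : ∀ x ∈ Icc (0 : ℝ) 1,
      y₂ x + -(k / 2 * (I + s)) * y₁ x + (-(k / 2 * (I + s))) ^ 2 * y x = 0 := by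
    have hs0 : s ≠ 0 := by rintro rfl; norm_num at hs
    have hcube : (-(k / 2 * (I + s))) ^ 3 = (I * k) ^ 3 := by
      have hs' : (s : ℂ) ^ 2 = 3 := by exact_mod_cast hs
      linear_combination (-(k : ℂ) ^ 3 / 8 * (3 * I + s)) * hs'
        - (k : ℂ) ^ 3 / 8 * (9 * I + 3 * s) * I_sq
    refine companion_eq_zero_of_periodic (exp_ne_one_of_re_ne_zero ?_) hy hy₁ (hcube ▸ hy₂)
      h₀ h₁ h₂
    simpa using mul_ne_zero (div_ne_zero hk two_ne_zero) hs0
  have hsqrt : Real.sqrt 3 ^ 2 = 3 := Real.sq_sqrt (by norm_num)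
  have hsqrt0 : (Real.sqrt 3 : ℂ) ≠ 0 := by exact_mod_cast (Real.sqrt_pos.2 (by norm_num)).ne'
  have hderiv : ∀ x ∈ Icc (0 : ℝ) 1, HasDerivWithinAt y (I * k * y x) (Icc 0 1) x := by
    intro x hx
    have hplus := companion (Real.sqrt 3) hsqrt x hx
    have hminus := companion (-Real.sqrt 3) (by rwa [neg_sq]) x hx
    push_cast at hminus
    have : (k * Real.sqrt 3 : ℂ) * (y₁ x - I * k * y x) = 0 := by
      linear_combination hminus - hplus
    rw [← sub_eq_zero.1 ((mul_eq_zero.1 this).resolve_left (mul_ne_zero (by exact_mod_cast hk)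
      hsqrt0))]
    exact hy x hx
  simpa using eq_mul_exp_of_hasDerivWithinAt_mul _ hderiv

end ThirdOrder

/-- every periodic eigenfunction of L₀y = i·y‴ for the eigenvalue
(2nπ)³ is a multiple of exp(2nπ·i·x); in particular each eigenvalue zₙ = (2nπ)³
is simple with eigenfunction uₙ(x) = exp(2nπ·i·x). -/
theorem stmt_15 (n : ℤ) (y : ℝ → ℂ)
    (hy : ContDiffOn ℝ 3 y (Set.Icc 0 1))
    (hode : ∀ x ∈ Set.Icc (0 : ℝ) 1,
      Complex.I * iteratedDerivWithin 3 y (Set.Icc 0 1) x = (2 * (n : ℂ) * Real.pi) ^ 3 * y x)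
    (hbc0 : y 1 = y 0)
    (hbc1 : iteratedDerivWithin 1 y (Set.Icc 0 1) 1 = iteratedDerivWithin 1 y (Set.Icc 0 1) 0)
    (hbc2 : iteratedDerivWithin 2 y (Set.Icc 0 1) 1 = iteratedDerivWithin 2 y (Set.Icc 0 1) 0) :
    ∀ x ∈ Set.Icc (0 : ℝ) 1, y x = y 0 * Complex.exp (2 * n * Real.pi * Complex.I * x) := by
  have hs : UniqueDiffOn ℝ (Icc (0 : ℝ) 1) := uniqueDiffOn_Icc one_pos
  have hD (m : ℕ) (hm : m < 3) (x : ℝ) (hx : x ∈ Icc (0 : ℝ) 1) :=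
    hy.hasDerivWithinAt_iteratedDerivWithin (by exact_mod_cast hm) hs hx
  have hy₂ : ∀ x ∈ Icc (0 : ℝ) 1, HasDerivWithinAt (iteratedDerivWithin 2 y (Icc 0 1))
      ((I * (2 * n * Real.pi : ℝ)) ^ 3 * y x) (Icc 0 1) x := by
    intro x hx
    have h3 : iteratedDerivWithin 3 y (Icc 0 1) x = (I * (2 * n * Real.pi : ℝ)) ^ 3 * y x := by
      push_cast
      linear_combination (-I) * hode x hx
        + (iteratedDerivWithin 3 y (Icc 0 1) x - I * (2 * n * Real.pi) ^ 3 * y x) * I_sq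
    exact h3 ▸ hD 2 (by norm_num) x hx
  intro x hx
  rw [eq_mul_exp_of_periodic_of_deriv_three _ (by simpa using hD 0 (by norm_num))
    (hD 1 (by norm_num)) hy₂ hbc0 hbc1 hbc2 x hx]
  push_cast
  ring_nf
end

section
/- The characteristic function Δ(0,λ) = 3·(c(iλ) − c(−iλ)) admits the convergent expansions Δ(0,λ) = 6·∑_{n=1}^{∞} (iλ)^{6n−3}/(6n−3)! (a power series converging for all λ ∈ ℂ) and the Hadamard product expansion Δ(0,λ) = −i·λ³·∏_{n=1}^{∞} (1 − λ⁶/(2nπ)⁶), where the infinite product converges for every λ ∈ ℂ. -/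
/-!
Because `exp (i w) - exp (-i w) = 2 i sin w`, `Δ₀ λ = 2 i (sin λ + sin (ω λ) + sin (ω² λ))`.

Expanding the three sines, the coefficient of `(i λ)^m` (for odd `m`) is `2 (1 + ω^m + ω^(2m)) / m!`,
which vanishes unless `3 ∣ m`; the odd multiples of `3` are the exponents `6n + 3`.

Since `λ + ω λ + ω² λ = 0`, the three sines combine into `-4 sin (λ/2) sin (ω λ/2) sin (ω² λ/2)`.
Multiplying Euler's products for these three sines, the `n`-th factors combine through
`(1 - u) (1 - ω u) (1 - ω² u) = 1 - u³` into `1 - λ⁶ / (2 n π)⁶`.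
-/

open Complex

/-- Δ(0,λ) = 3·(c(iλ) − c(−iλ)). -/
noncomputable def Δ₀ (lam : ℂ) : ℂ := 3 * (cf (Complex.I * lam) - cf (-(Complex.I * lam)))

open scoped Nat Real

section CubeRoots

variable {R : Type*} [CommRing R] [IsDomain R] {ζ : R}

theorem IsPrimitiveRoot.one_add_self_add_sq (hζ : IsPrimitiveRoot ζ 3) : 1 + ζ + ζ ^ 2 = 0 := by
  simpa [Finset.sum_range_succ] using hζ.geom_sum_eq_zero (by norm_num)

theorem IsPrimitiveRoot.one_add_pow_add_pow_sq (hζ : IsPrimitiveRoot ζ 3) {m : ℕ} (hm : ¬ 3 ∣ m) :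
    1 + ζ ^ m + (ζ ^ m) ^ 2 = 0 :=
  (hζ.pow_of_coprime m
    ((Nat.Prime.coprime_iff_not_dvd Nat.prime_three).2 hm).symm).one_add_self_add_sq

theorem IsPrimitiveRoot.one_sub_mul_one_sub_mul_one_sub (hζ : IsPrimitiveRoot ζ 3) (u : R) :
    (1 - u) * (1 - ζ * u) * (1 - ζ ^ 2 * u) = 1 - u ^ 3 := by
  linear_combination (u ^ 2 - u) * hζ.one_add_self_add_sq + (u ^ 2 - u ^ 3) * hζ.pow_eq_one

end CubeRoots

namespace Complex

theorem exp_I_mul_sub_exp_neg_I_mul (z : ℂ) :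
    exp (I * z) - exp (-(I * z)) = 2 * I * sin z := by
  rw [Complex.sin, neg_mul, mul_comm z I]
  linear_combination (exp (I * z) - exp (-(I * z))) * I_sq

theorem hasSum_two_I_mul_sin (z : ℂ) :
    HasSum (fun n : ℕ => 2 * (I * z) ^ (2 * n + 1) / (2 * n + 1)!) (2 * I * sin z) :=
  ((hasSum_sin' z).mul_left (2 * I)).congr_fun fun n => by
    rw [mul_comm z I]
    field_simp

theorem sin_two_mul_add_sin_two_mul_add_sin_two_mul {a b c : ℂ} (h : a + b + c = 0) :
    sin (2 * a) + sin (2 * b) + sin (2 * c) = -4 * sin a * sin b * sin c := by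
  obtain rfl : c = -(a + b) := by linear_combination h
  simp only [mul_neg, sin_neg, sin_two_mul, sin_add, cos_add]
  linear_combination (-2 * sin a * cos a) * sin_sq_add_cos_sq b +
    (-2 * sin b * cos b) * sin_sq_add_cos_sq a

theorem multipliable_euler_sin (z : ℂ) :
    Multipliable fun n : ℕ => 1 - z ^ 2 / ((n : ℂ) + 1) ^ 2 := by
  simpa [sineTerm, neg_div, ← sub_eq_add_neg] using multipliable_sineTerm z

theorem sin_pi_mul_eq_mul_tprod (z : ℂ) :
    sin (π * z) = π * z * ∏' n : ℕ, (1 - z ^ 2 / ((n : ℂ) + 1) ^ 2) :=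
  tendsto_nhds_unique (tendsto_euler_sin_prod z)
    ((multipliable_euler_sin z).hasProd.tendsto_prod_nat.const_mul _)

end Complex

section EulerCubeRoots

variable {ζ : ℂ}

theorem IsPrimitiveRoot.euler_sin_factor_mul (hζ : IsPrimitiveRoot ζ 3) (x : ℂ) (n : ℕ) :
    (1 - x ^ 2 / ((n : ℂ) + 1) ^ 2) * (1 - (ζ * x) ^ 2 / ((n : ℂ) + 1) ^ 2) *
      (1 - (ζ ^ 2 * x) ^ 2 / ((n : ℂ) + 1) ^ 2) = 1 - x ^ 6 / ((n : ℂ) + 1) ^ 6 := by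
  generalize (n : ℂ) + 1 = y
  set u := x ^ 2 / y ^ 2
  linear_combination hζ.one_sub_mul_one_sub_mul_one_sub u -
    (1 - u) * (1 - ζ ^ 2 * u) * ζ * u * hζ.pow_eq_one

theorem IsPrimitiveRoot.hasProd_one_sub_pow_six (hζ : IsPrimitiveRoot ζ 3) (x : ℂ) :
    HasProd (fun n : ℕ => 1 - x ^ 6 / ((n : ℂ) + 1) ^ 6)
      ((∏' n : ℕ, (1 - x ^ 2 / ((n : ℂ) + 1) ^ 2)) *
        (∏' n : ℕ, (1 - (ζ * x) ^ 2 / ((n : ℂ) + 1) ^ 2)) *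
        ∏' n : ℕ, (1 - (ζ ^ 2 * x) ^ 2 / ((n : ℂ) + 1) ^ 2)) :=
  (((multipliable_euler_sin x).hasProd.mul (multipliable_euler_sin (ζ * x)).hasProd).mul
    (multipliable_euler_sin (ζ ^ 2 * x)).hasProd).congr_fun fun n =>
      (hζ.euler_sin_factor_mul x n).symm

theorem IsPrimitiveRoot.sin_mul_sin_mul_sin (hζ : IsPrimitiveRoot ζ 3) (x : ℂ) :
    sin (π * x) * sin (π * (ζ * x)) * sin (π * (ζ ^ 2 * x)) =
      π ^ 3 * x ^ 3 * ∏' n : ℕ, (1 - x ^ 6 / ((n : ℂ) + 1) ^ 6) := by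
  have hcube : π * x * (π * (ζ * x)) * (π * (ζ ^ 2 * x)) = π ^ 3 * x ^ 3 := by
    linear_combination π ^ 3 * x ^ 3 * hζ.pow_eq_one
  rw [(hζ.hasProd_one_sub_pow_six x).tprod_eq, sin_pi_mul_eq_mul_tprod,
    sin_pi_mul_eq_mul_tprod, sin_pi_mul_eq_mul_tprod, ← hcube]
  ring

end EulerCubeRoots

theorem isPrimitiveRoot_ω : IsPrimitiveRoot ω 3 := by
  simpa [ω] using Complex.isPrimitiveRoot_exp 3 (by norm_num)

theorem Δ₀_eq_two_I_mul_sum_sin (lam : ℂ) :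
    Δ₀ lam = 2 * I * (sin lam + sin (ω * lam) + sin (ω ^ 2 * lam)) := by
  have h : ∀ w : ℂ, exp (w * (I * lam)) - exp (w * -(I * lam)) = 2 * I * sin (w * lam) := by
    intro w
    rw [mul_neg, mul_left_comm, exp_I_mul_sub_exp_neg_I_mul]
  have h₁ := h 1
  simp only [one_mul] at h₁
  simp only [Δ₀, cf, pow_one, isPrimitiveRoot_ω.pow_eq_one, one_mul]
  linear_combination h₁ + h ω + h (ω ^ 2)

theorem hasSum_Δ₀ (lam : ℂ) :
    HasSum (fun n : ℕ => 2 * (1 + ω ^ (2 * n + 1) + (ω ^ (2 * n + 1)) ^ 2) *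
      (I * lam) ^ (2 * n + 1) / (2 * n + 1)!) (Δ₀ lam) := by
  rw [Δ₀_eq_two_I_mul_sum_sin, mul_add, mul_add]
  refine (((hasSum_two_I_mul_sin lam).add (hasSum_two_I_mul_sin (ω * lam))).add
    (hasSum_two_I_mul_sin (ω ^ 2 * lam))).congr_fun fun n => ?_
  simp only [mul_left_comm I, mul_pow, ← pow_mul, pow_right_comm ω 2]
  ring

theorem hasSum_Δ₀_div_six (lam : ℂ) :
    HasSum (fun n : ℕ => (I * lam) ^ (6 * n + 3) / (6 * n + 3)!) (Δ₀ lam / 6) := by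
  have hinj : Function.Injective fun m : ℕ => 3 * m + 1 := fun a b h => by simpa using h
  have h := ((hinj.hasSum_iff ?_).2 (hasSum_Δ₀ lam)).div_const 6
  · refine h.congr_fun fun m => ?_
    have hm : 2 * (3 * m + 1) + 1 = 3 * (2 * m + 1) := by ring
    simp only [Function.comp_apply, hm, pow_mul, isPrimitiveRoot_ω.pow_eq_one, one_pow]
    rw [show 3 * (2 * m + 1) = 6 * m + 3 by ring]
    ring
  · intro n hn
    have h3 : ¬ 3 ∣ 2 * n + 1 := fun h => hn ⟨n / 3, show 3 * (n / 3) + 1 = n by omega⟩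
    simp [isPrimitiveRoot_ω.one_add_pow_add_pow_sq h3]

theorem Δ₀_eq_neg_eight_I_mul_sin (lam : ℂ) :
    Δ₀ lam = -8 * I * (sin (lam / 2) * sin (ω * lam / 2) * sin (ω ^ 2 * lam / 2)) := by
  have hsum : lam / 2 + ω * lam / 2 + ω ^ 2 * lam / 2 = 0 := by
    linear_combination lam / 2 * isPrimitiveRoot_ω.one_add_self_add_sq
  have h := sin_two_mul_add_sin_two_mul_add_sin_two_mul hsum
  simp only [mul_div_cancel₀ _ (two_ne_zero (α := ℂ))] at h
  rw [Δ₀_eq_two_I_mul_sum_sin]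
  linear_combination 2 * I * h

theorem Δ₀_eq_neg_I_mul_tprod (lam : ℂ) :
    Δ₀ lam = -I * lam ^ 3 * ∏' n : ℕ, (1 - lam ^ 6 / (2 * ((n : ℂ) + 1) * π) ^ 6) := by
  have hπ : (π : ℂ) ≠ 0 := ofReal_ne_zero.2 Real.pi_ne_zero
  have h := isPrimitiveRoot_ω.sin_mul_sin_mul_sin (lam / (2 * π))
  rw [Δ₀_eq_neg_eight_I_mul_sin]
  field_simp at h ⊢
  linear_combination -h

/-- power-series and Hadamard product expansions of Δ(0,λ). -/
theorem stmt_18 (lam : ℂ) :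
    (Summable fun n : ℕ =>
      (Complex.I * lam) ^ (6 * (n + 1) - 3) / (Nat.factorial (6 * (n + 1) - 3) : ℂ)) ∧
    Δ₀ lam = 6 * ∑' n : ℕ,
      (Complex.I * lam) ^ (6 * (n + 1) - 3) / (Nat.factorial (6 * (n + 1) - 3) : ℂ) ∧
    (Multipliable fun n : ℕ =>
      (1 - lam ^ 6 / (2 * ((n : ℂ) + 1) * Real.pi) ^ 6)) ∧
    Δ₀ lam = -Complex.I * lam ^ 3 * ∏' n : ℕ,
      (1 - lam ^ 6 / (2 * ((n : ℂ) + 1) * Real.pi) ^ 6) := by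
  have hindex : ∀ n : ℕ, 6 * (n + 1) - 3 = 6 * n + 3 := fun n => by omega
  have hfactor : ∀ n : ℕ,
      lam ^ 6 / (2 * ((n : ℂ) + 1) * π) ^ 6 = (lam / (2 * π)) ^ 6 / ((n : ℂ) + 1) ^ 6 :=
    fun n => by field_simp
  have hseries := hasSum_Δ₀_div_six lam
  simp only [hindex]
  refine ⟨hseries.summable, by rw [hseries.tsum_eq]; ring, ?_, Δ₀_eq_neg_I_mul_tprod lam⟩
  simp only [hfactor]
  exact (isPrimitiveRoot_ω.hasProd_one_sub_pow_six _).multipliable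
end
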